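/- Let X be a (K,L)-quasi-geodesic metric space, Y ⊆ X, and suppose Y is (A,D)-contracting. Then Y is Q-strongly quasiconvex, where the gauge Q is determined by A, D, K, and L. That is, for every λ ≥ 1, ε ≥ 0 there is a bound Q(λ,ε) depending only on A, D, K, L, λ, ε such that every (λ,ε)-quasi-geodesic with endpoints on Y is contained in the Q(λ,ε)-neighborhood of Y. -/

import Mathlib

open Metric

/-- A map is `(D,D)`-coarsely Lipschitz. -/
def CoarseLipschitz {X : Type*} [MetricSpace X] (D : ℝ) (g : X → X) : Prop :=
  ∀ x y : X, dist (g x) (g y) ≤ D * dist x y + D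

/-- `g : X → Y` is `(A,D)`-contracting. -/
def ContractingMap {X : Type*} [MetricSpace X] (A D : ℝ) (Y : Set X) (g : X → X) : Prop :=
  (∀ x, g x ∈ Y) ∧ CoarseLipschitz D g ∧ (∀ y ∈ Y, dist y (g y) ≤ D) ∧
  (∀ x x₁ x₂ : X, dist x x₁ ≤ A * infDist x Y → dist x x₂ ≤ A * infDist x Y →
    dist (g x₁) (g x₂) ≤ D)

/-- `(K,L)`-quasi-geodesic on `[a,b]`. -/
def QuasiGeodesicOn {X : Type*} [MetricSpace X] (K L : ℝ) (γ : ℝ → X) (a b : ℝ) : Prop :=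
  ∀ s ∈ Set.Icc a b, ∀ t ∈ Set.Icc a b,
    (1 / K) * |s - t| - L ≤ dist (γ s) (γ t) ∧ dist (γ s) (γ t) ≤ K * |s - t| + L

/-- `X` is a `(K,L)`-quasi-geodesic metric space. -/
def IsQuasiGeodesicSpace (X : Type*) [MetricSpace X] (K L : ℝ) : Prop :=
  ∀ x y : X, ∃ (γ : ℝ → X) (a b : ℝ), a ≤ b ∧ QuasiGeodesicOn K L γ a b ∧ γ a = x ∧ γ b = y

/-- `Y` is strongly quasiconvex with gauge `Q`. -/
def StronglyQuasiconvex {X : Type*} [MetricSpace X] (Q : ℝ → ℝ → ℝ) (Y : Set X) : Prop :=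
  ∀ K L : ℝ, 1 ≤ K → 0 ≤ L → ∀ (γ : ℝ → X) (a b : ℝ), a ≤ b →
    QuasiGeodesicOn K L γ a b → γ a ∈ Y → γ b ∈ Y →
    ∀ t ∈ Set.Icc a b, infDist (γ t) Y ≤ Q K L

/-! Subdivide `[a, b]` into equal steps of length between
`c = K (D + 1)` and `2c` and take the two consecutive grid points `s i ≤ t ≤ s j` that are
`R`-close to `Y`. Each step between them has an endpoint farther than `R` from `Y`, and a ball of
radius `A R` around that endpoint contains the whole step, so `g` moves the two ends of the step by
at most `D`. Hence `g (γ (s i))` and `g (γ (s j))` are at most `(j - i) D` apart, whereas the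
quasi-geodesic lower bound makes them at least `(j - i) (D + 1) - O(R)` apart. So `j - i` is bounded,
and `γ t` is a bounded number of steps away from the point `γ (s i)` near `Y`. -/

theorem exists_consecutive_bracketing {α : Type*} [LinearOrder α] {P : ℕ → Prop}
    [DecidablePred P] {s : ℕ → α} {t : α} {N : ℕ} (h0 : P 0) (hs0 : s 0 ≤ t) (hN : P N)
    (hsN : t ≤ s N) :
    ∃ i j, i ≤ j ∧ j ≤ N ∧ P i ∧ P j ∧ s i ≤ t ∧ t ≤ s j ∧ ∀ l, i < l → l < j → ¬P l := by
  set i := Nat.findGreatest (fun l => P l ∧ s l ≤ t) N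
  have hi : P i ∧ s i ≤ t :=
    Nat.findGreatest_spec (P := fun l => P l ∧ s l ≤ t) (Nat.zero_le N) ⟨h0, hs0⟩
  have hex : ∃ j, i ≤ j ∧ j ≤ N ∧ P j ∧ t ≤ s j := ⟨N, Nat.findGreatest_le N, le_rfl, hN, hsN⟩
  obtain ⟨hij, hjN, hj, hsj⟩ := Nat.find_spec hex
  refine ⟨i, Nat.find hex, hij, hjN, hi.1, hj, hi.2, hsj, fun l hil hlj hl => ?_⟩
  rcases le_total (s l) t with hsl | hsl
  · exact Nat.findGreatest_is_greatest hil (hlj.le.trans hjN) ⟨hl, hsl⟩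
  · exact Nat.find_min hex hlj ⟨hil.le, hlj.le.trans hjN, hl, hsl⟩

theorem exists_uniform_partition {a b c : ℝ} (hc : 0 < c) (hab : a ≤ b) :
    ∃ (N : ℕ) (δ : ℝ), a + N * δ = b ∧ 0 ≤ δ ∧ δ ≤ 2 * c ∧ (2 ≤ N → c ≤ δ) := by
  by_cases hshort : b - a ≤ 2 * c
  · exact ⟨1, b - a, by ring, by linarith, hshort, by omega⟩
  set N := ⌊(b - a) / c⌋₊
  have hN : (N : ℝ) ≤ (b - a) / c := Nat.floor_le (by positivity)
  have hN' : (b - a) / c < N + 1 := Nat.lt_floor_add_one _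
  have h2c : 2 < (b - a) / c := by rw [lt_div_iff₀ hc]; linarith
  have hN2 : (2 : ℝ) ≤ N := by exact_mod_cast (Nat.le_floor (by exact_mod_cast h2c.le) : 2 ≤ N)
  have hNpos : (0 : ℝ) < N := by linarith
  refine ⟨N, (b - a) / N, by field_simp; ring, by positivity, ?_, fun _ => ?_⟩
  · rw [div_le_iff₀ hNpos]; rw [div_lt_iff₀ hc] at hN'; nlinarith
  · rw [le_div_iff₀ hNpos, mul_comm]; rwa [le_div_iff₀ hc] at hN

theorem mem_Icc_of_uniform_partition {a b δ : ℝ} {N l : ℕ} (hδ : 0 ≤ δ) (hb : a + N * δ = b)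
    (hl : l ≤ N) : a + l * δ ∈ Set.Icc a b := by
  have : (l : ℝ) * δ ≤ N * δ := by gcongr
  constructor <;> nlinarith [Nat.cast_nonneg (α := ℝ) l]

/- `c` is the least step length of the subdivision, `R` the distance from `Y` beyond which a step
of length at most `2 * c` stays inside the contracting ball, and `max 1 (…)` bounds the number of
steps between consecutive grid points that are `R`-close to `Y`. -/
noncomputable def contractingGauge (A D K L : ℝ) : ℝ :=
  let c := K * (D + 1)
  let R := (2 * K * c + L) / A
  R + 2 * K * c * max 1 (2 * ((D + 1) * R + 2 * D) + L) + L

namespace ContractingMap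

variable {X : Type*} [MetricSpace X] {A D : ℝ} {Y : Set X} {g : X → X}

theorem dist_map_le (hg : ContractingMap A D Y g) (hD : 0 ≤ D) (x : X) :
    dist x (g x) ≤ (D + 1) * infDist x Y + 2 * D := by
  have hpoint : ∀ y ∈ Y, dist x (g x) ≤ (D + 1) * dist x y + 2 * D := fun y hy =>
    calc dist x (g x) ≤ dist x y + dist y (g y) + dist (g y) (g x) := dist_triangle4 _ _ _ _
      _ ≤ dist x y + D + (D * dist x y + D) := by
          rw [dist_comm x y]; linarith [hg.2.2.1 y hy, hg.2.1 y x]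
      _ = (D + 1) * dist x y + 2 * D := by ring
  have key : (dist x (g x) - 2 * D) / (D + 1) ≤ infDist x Y :=
    (le_infDist ⟨g x, hg.1 x⟩).2 fun y hy =>
      (div_le_iff₀ (by linarith)).2 (by linarith [hpoint y hy])
  rw [div_le_iff₀ (by linarith)] at key
  linarith

theorem dist_map_map_le (hg : ContractingMap A D Y g) (hA : 0 ≤ A) {x y : X}
    (h : dist x y ≤ A * infDist x Y) : dist (g x) (g y) ≤ D :=
  hg.2.2.2 x x y (by rw [dist_self]; exact mul_nonneg hA infDist_nonneg) h

theorem dist_le_of_excursion (hg : ContractingMap A D Y g) (hA : 0 ≤ A) (hD : 0 ≤ D)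
    {z : ℕ → X} {R : ℝ} {i j : ℕ} (hij : i + 2 ≤ j)
    (hstep : ∀ l, i ≤ l → l < j → dist (z l) (z (l + 1)) ≤ A * R)
    (hi : infDist (z i) Y ≤ R) (hj : infDist (z j) Y ≤ R)
    (hfar : ∀ l, i < l → l < j → R < infDist (z l) Y) :
    dist (z i) (z j) ≤ 2 * ((D + 1) * R + 2 * D) + ((j : ℝ) - i) * D := by
  have hfar_step : ∀ l, i < l → l < j → A * R ≤ A * infDist (z l) Y :=
    fun l hil hlj => mul_le_mul_of_nonneg_left (hfar l hil hlj).le hA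
  have hchain : dist (g (z i)) (g (z j)) ≤ ((j : ℝ) - i) * D := by
    have := dist_le_Ico_sum_of_dist_le (f := g ∘ z) (d := fun _ => D) (by omega : i ≤ j)
      fun {l} hil hlj => by
        rcases hil.lt_or_eq with hil | rfl
        · exact hg.dist_map_map_le hA ((hstep l hil.le hlj).trans (hfar_step l hil hlj))
        · rw [dist_comm]
          refine hg.dist_map_map_le hA ?_
          rw [dist_comm]
          exact (hstep i le_rfl hlj).trans (hfar_step (i + 1) (by omega) (by omega))
    simpa [Nat.cast_sub (by omega : i ≤ j)] using this
  have hproj : ∀ x, infDist x Y ≤ R → dist x (g x) ≤ (D + 1) * R + 2 * D := fun x hx =>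
    (hg.dist_map_le hD x).trans (by gcongr)
  calc dist (z i) (z j)
      ≤ dist (z i) (g (z i)) + dist (g (z i)) (g (z j)) + dist (g (z j)) (z j) :=
        dist_triangle4 _ _ _ _
    _ ≤ ((D + 1) * R + 2 * D) + ((j : ℝ) - i) * D + ((D + 1) * R + 2 * D) := by
        rw [dist_comm (g (z j))]
        gcongr
        exacts [hproj _ hi, hproj _ hj]
    _ = _ := by ring

theorem sub_le_of_excursion (hg : ContractingMap A D Y g) (hA : 0 ≤ A) (hD : 0 ≤ D)
    {γ : ℝ → X} {K L a b δ R : ℝ} {N i j : ℕ} (hγ : QuasiGeodesicOn K L γ a b) (hK : 0 < K)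
    (hb : a + N * δ = b) (hδ : K * (D + 1) ≤ δ) (hR : K * δ + L ≤ A * R)
    (hij : i + 2 ≤ j) (hjN : j ≤ N)
    (hi : infDist (γ (a + i * δ)) Y ≤ R) (hj : infDist (γ (a + j * δ)) Y ≤ R)
    (hfar : ∀ l : ℕ, i < l → l < j → R < infDist (γ (a + l * δ)) Y) :
    (j : ℝ) - i ≤ 2 * ((D + 1) * R + 2 * D) + L := by
  have hδ0 : 0 ≤ δ := le_trans (by positivity) hδ
  have hmem : ∀ l ≤ N, a + l * δ ∈ Set.Icc a b := fun l hl =>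
    mem_Icc_of_uniform_partition hδ0 hb hl
  have hupper := hg.dist_le_of_excursion hA hD (z := fun l => γ (a + l * δ)) hij
    (fun l _ hlj => by
      refine (hγ _ (hmem l (by omega)) _ (hmem (l + 1) (by omega))).2.trans (le_trans ?_ hR)
      rw [show a + l * δ - (a + ((l + 1 : ℕ) : ℝ) * δ) = -δ by push_cast; ring, abs_neg,
        abs_of_nonneg hδ0])
    hi hj hfar
  have hlower := (hγ _ (hmem j hjN) _ (hmem i (by omega))).1
  have hji : (0 : ℝ) ≤ j - i := by
    rw [sub_nonneg]; exact_mod_cast (by omega : i ≤ j)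
  rw [show a + j * δ - (a + i * δ) = (j - i) * δ by ring, abs_of_nonneg (by positivity)]
    at hlower
  have hsteps : ((j : ℝ) - i) * (D + 1) ≤ 1 / K * (((j : ℝ) - i) * δ) := by
    rw [one_div_mul_eq_div, le_div_iff₀ hK]
    nlinarith
  rw [dist_comm] at hlower
  nlinarith

theorem infDist_le_contractingGauge (hg : ContractingMap A D Y g) (hA : 0 < A) (hD : 0 ≤ D)
    {γ : ℝ → X} {K L a b t : ℝ} (hK : 0 < K) (hL : 0 ≤ L) (hab : a ≤ b)
    (hγ : QuasiGeodesicOn K L γ a b) (ha : γ a ∈ Y) (hb : γ b ∈ Y) (ht : t ∈ Set.Icc a b) :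
    infDist (γ t) Y ≤ contractingGauge A D K L := by
  set c := K * (D + 1)
  set R := (2 * K * c + L) / A
  set M := 2 * ((D + 1) * R + 2 * D) + L
  show infDist (γ t) Y ≤ R + 2 * K * c * max 1 M + L
  have hc : 0 < c := by positivity
  obtain ⟨N, δ, hNb, hδ0, hδc, hδN⟩ := exists_uniform_partition hc hab
  have hR0 : 0 ≤ R := by positivity
  have hR : K * δ + L ≤ A * R := by
    rw [mul_div_cancel₀ _ hA.ne']; nlinarith
  have hnear : ∀ x ∈ Y, infDist x Y ≤ R := fun x hx => (infDist_zero_of_mem hx).le.trans hR0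
  obtain ⟨i, j, hij, hjN, hi, hj, hsi, hsj, hfar⟩ :=
    exists_consecutive_bracketing (P := fun l : ℕ => infDist (γ (a + l * δ)) Y ≤ R)
      (s := fun l : ℕ => a + l * δ) (t := t)
      (by rw [Nat.cast_zero, zero_mul, add_zero]; exact hnear _ ha)
      (by rw [Nat.cast_zero, zero_mul, add_zero]; exact ht.1)
      (by rw [hNb]; exact hnear _ hb) (by rw [hNb]; exact ht.2)
  have hgap : (j : ℝ) - i ≤ max 1 M := by
    rcases Nat.lt_or_ge (i + 1) j with h | h
    · exact le_max_of_le_right <| hg.sub_le_of_excursion hA.le hD hγ hK hNb (hδN (by omega)) hR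
        (by omega) hjN hi hj fun l h1 h2 => not_le.mp (hfar l h1 h2)
    · have : (j : ℝ) ≤ i + 1 := by exact_mod_cast h
      exact le_max_of_le_left (by linarith)
  have hti : 0 ≤ t - (a + i * δ) := sub_nonneg.mpr hsi
  calc infDist (γ t) Y
      ≤ infDist (γ (a + i * δ)) Y + dist (γ t) (γ (a + i * δ)) := infDist_le_infDist_add_dist
    _ ≤ R + (K * |t - (a + i * δ)| + L) :=
        add_le_add hi (hγ _ ht _ (mem_Icc_of_uniform_partition hδ0 hNb (hij.trans hjN))).2
    _ ≤ R + (K * (((j : ℝ) - i) * δ) + L) := by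
        rw [abs_of_nonneg hti]; gcongr; linarith
    _ ≤ R + 2 * K * c * max 1 M + L := by
        have := mul_le_mul hgap hδc hδ0 (by positivity)
        nlinarith

end ContractingMap

theorem contracting_implies_stronglyQuasiconvex_general (A D K L : ℝ)
    (hA : 0 < A) (hD : 1 ≤ D) :
    ∃ Q : ℝ → ℝ → ℝ,
      ∀ (X : Type) [MetricSpace X], IsQuasiGeodesicSpace X K L →
        ∀ Y : Set X, (∃ g : X → X, ContractingMap A D Y g) →
          StronglyQuasiconvex Q Y := by
  refine ⟨contractingGauge A D, fun X _ _ Y ⟨g, hg⟩ => ?_⟩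
  intro K' L' hK' hL' γ a b hab hγ ha hb t ht
  exact hg.infDist_le_contractingGauge hA (by linarith) (by linarith) hL' hab hγ ha hb ht

/-- An `(A,D)`-contracting subset of a `(K,L)`-quasi-geodesic space is `Q`-strongly
quasiconvex, with the gauge `Q` determined by `A`, `D`, `K`, `L`. -/
theorem contracting_implies_stronglyQuasiconvex (A D K L : ℝ)
    (hA : 0 < A) (hA1 : A ≤ 1) (hD : 1 ≤ D) (hK : 1 ≤ K) (hL : 0 ≤ L) :
    ∃ Q : ℝ → ℝ → ℝ,
      ∀ (X : Type) [MetricSpace X], IsQuasiGeodesicSpace X K L →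
        ∀ Y : Set X, (∃ g : X → X, ContractingMap A D Y g) →
          StronglyQuasiconvex Q Y :=
  contracting_implies_stronglyQuasiconvex_general A D K L hA hD
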